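/- arXiv:math/0012193 — 7 statements merged into one kernel-verified Lean document; each statement's English description precedes it below -/
import Mathlib

section
/- The character (generating function by total degree) of the set of partitions λ = (λ₁ ≥ λ₂ ≥ λ₃ ≥ 0) satisfying λ₁ - λ₃ ≥ p-2 is (q^{p-2} + q^{p-1} - q^{2p-3}) / ((1-q)(1-q²)(1-q³)). That is, ∑_{0≤a≤b≤c, c-a≥p-2} q^{a+b+c} = (q^{p-2}+q^{p-1}-q^{2p-3})/((1-q)(1-q²)(1-q³)) as formal power series. -/
open Finset PowerSeries

private def Tset (p n : ℕ) : Finset (ℕ × ℕ × ℕ) :=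
  ((range (n+1)) ×ˢ (range (n+1)) ×ˢ (range (n+1))).filter
    (fun t => t.1 ≤ t.2.1 ∧ t.2.1 ≤ t.2.2 ∧ t.1 + t.2.1 + t.2.2 = n ∧
      t.1 + (p - 2) ≤ t.2.2)

private lemma mem_Tset {p n : ℕ} {t : ℕ × ℕ × ℕ} :
    t ∈ Tset p n ↔ t.1 ≤ t.2.1 ∧ t.2.1 ≤ t.2.2 ∧ t.1 + t.2.1 + t.2.2 = n ∧
      t.1 + (p - 2) ≤ t.2.2 := by
  simp only [Tset, mem_filter, mem_product, mem_range]
  constructor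
  · tauto
  · intro h
    exact ⟨⟨by omega, by omega, by omega⟩, h⟩

private def Hf (p n : ℕ) : ℤ := ((min (n/2 + 1) (n + 1 - (p-2)) : ℕ) : ℤ)

/-- count of a = 0 triples when n ≥ p-2 -/
private lemma Tzero_card {p n : ℕ} (hn : p - 2 ≤ n) :
    ((Tset p n).filter (fun t => t.1 = 0)).card = min (n/2) (n - (p-2)) + 1 := by
  rw [← card_range (min (n/2) (n - (p-2)) + 1)]
  apply card_nbij' (fun t => t.2.1) (fun b => (0, b, n - b))
  · intro t ht
    simp only [Finset.mem_coe, mem_filter, mem_Tset] at ht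
    simp only [Finset.mem_coe, mem_range]
    omega
  · intro b hb
    simp only [Finset.mem_coe, mem_range] at hb
    simp only [Finset.mem_coe, mem_filter, mem_Tset]
    exact ⟨⟨by omega, by omega, by omega, by omega⟩, trivial⟩
  · intro t ht
    simp only [Finset.mem_coe, mem_filter, mem_Tset] at ht
    obtain ⟨⟨h1, h2, h3, h4⟩, h5⟩ := ht
    ext <;> simp <;> omega
  · intro b hb
    rfl

/-- when n < p-2 the whole set is empty -/
private lemma Tset_empty {p n : ℕ} (hn : n < p - 2) : Tset p n = ∅ := by
  ext t
  simp only [mem_Tset, notMem_empty, iff_false]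
  intro h
  omega

/-- a ≥ 1 triples for n ≥ 3 biject with triples of n - 3 -/
private lemma Tpos_card {p n : ℕ} (hn : 3 ≤ n) :
    ((Tset p n).filter (fun t => ¬ t.1 = 0)).card = (Tset p (n-3)).card := by
  apply card_nbij' (fun t => (t.1 - 1, t.2.1 - 1, t.2.2 - 1))
    (fun t => (t.1 + 1, t.2.1 + 1, t.2.2 + 1))
  · intro t ht
    simp only [Finset.mem_coe, mem_filter, mem_Tset] at ht ⊢
    omega
  · intro t ht
    simp only [Finset.mem_coe, mem_filter, mem_Tset] at ht ⊢
    omega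
  · intro t ht
    simp only [Finset.mem_coe, mem_filter, mem_Tset] at ht
    ext <;> simp <;> omega
  · intro t ht
    simp only [Finset.mem_coe, mem_Tset] at ht
    ext <;> simp

/-- a ≥ 1 triples for n < 3 : none -/
private lemma Tpos_empty {p n : ℕ} (hn : n < 3) :
    ((Tset p n).filter (fun t => ¬ t.1 = 0)) = ∅ := by
  ext t
  simp only [mem_filter, mem_Tset, notMem_empty, iff_false]
  intro h
  omega

private lemma Fc_sub (p : ℕ) (hp : 4 ≤ p) (n : ℕ) :
    ((Tset p n).card : ℤ) - (if 3 ≤ n then ((Tset p (n-3)).card : ℤ) else 0) = Hf p n := by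
  classical
  have hsplit : ((Tset p n).filter (fun t => t.1 = 0)).card +
      ((Tset p n).filter (fun t => ¬ t.1 = 0)).card = (Tset p n).card :=
    card_filter_add_card_filter_not _
  by_cases hn : p - 2 ≤ n
  · have hz := Tzero_card (p := p) hn
    by_cases h3 : 3 ≤ n
    · have hpos := Tpos_card (p := p) h3
      rw [if_pos h3]
      unfold Hf
      omega
    · rw [if_neg h3]
      have hpos : ((Tset p n).filter (fun t => ¬ t.1 = 0)).card = 0 := by
        rw [Tpos_empty (by omega)]; rfl
      unfold Hf
      omega
  · have h1 : (Tset p n).card = 0 := by rw [Tset_empty (by omega)]; rfl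
    have h2 : (if 3 ≤ n then ((Tset p (n-3)).card : ℤ) else 0) = 0 := by
      split_ifs with h3
      · rw [Tset_empty (p := p) (by omega)]; rfl
      · rfl
    rw [h1, h2]
    unfold Hf
    omega

set_option maxHeartbeats 1600000 in
private lemma Hrec (p : ℕ) (hp : 4 ≤ p) (n : ℕ) :
    Hf p n - (if 1 ≤ n then Hf p (n-1) else 0) - (if 2 ≤ n then Hf p (n-2) else 0)
      + (if 3 ≤ n then Hf p (n-3) else 0)
    = (if n = p-2 then 1 else 0) + (if n = p-1 then 1 else 0)
      - (if n = 2*p-3 then 1 else 0) := by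
  unfold Hf
  split_ifs <;> omega

/-- the generating function of triples 0 ≤ a ≤ b ≤ c with c - a ≥ p-2,
weighted by q^{a+b+c}, equals (q^{p-2}+q^{p-1}-q^{2p-3})/((1-q)(1-q²)(1-q³)) in ℤ[[q]]. -/
theorem stmt0 (p : ℕ) (hp : 4 ≤ p) :
    (PowerSeries.mk (fun d =>
      ((((range (d+1)) ×ˢ (range (d+1)) ×ˢ (range (d+1))).filter
        (fun t => t.1 ≤ t.2.1 ∧ t.2.1 ≤ t.2.2 ∧ t.1 + t.2.1 + t.2.2 = d ∧
          t.1 + (p - 2) ≤ t.2.2)).card : ℤ)) : PowerSeries ℤ)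
      * ((1 - X) * (1 - X ^ 2) * (1 - X ^ 3))
      = X ^ (p - 2) + X ^ (p - 1) - X ^ (2 * p - 3) := by
  have hA : (PowerSeries.mk (fun d =>
      ((((range (d+1)) ×ˢ (range (d+1)) ×ˢ (range (d+1))).filter
        (fun t => t.1 ≤ t.2.1 ∧ t.2.1 ≤ t.2.2 ∧ t.1 + t.2.1 + t.2.2 = d ∧
          t.1 + (p - 2) ≤ t.2.2)).card : ℤ)) : PowerSeries ℤ)
      = PowerSeries.mk (fun d => ((Tset p d).card : ℤ)) := rfl
  rw [hA]
  set A : PowerSeries ℤ := PowerSeries.mk (fun d => ((Tset p d).card : ℤ)) with hAdef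
  have h1 : A * (1 - X ^ 3) = PowerSeries.mk (Hf p) := by
    ext n
    rw [mul_sub, mul_one, map_sub, coeff_mul_X_pow', coeff_mk, coeff_mk]
    split_ifs with h
    · rw [coeff_mk]
      have := Fc_sub p hp n
      rw [if_pos h] at this
      exact this
    · have := Fc_sub p hp n
      rw [if_neg h] at this
      simpa using this
  have h2 : PowerSeries.mk (Hf p) * ((1 - X) * (1 - X ^ 2))
      = X ^ (p - 2) + X ^ (p - 1) - X ^ (2 * p - 3) := by
    have hexp : PowerSeries.mk (Hf p) * ((1 - X) * (1 - X ^ 2))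
        = PowerSeries.mk (Hf p) - PowerSeries.mk (Hf p) * X ^ 1
          - PowerSeries.mk (Hf p) * X ^ 2 + PowerSeries.mk (Hf p) * X ^ 3 := by
      ring
    rw [hexp]
    ext n
    rw [map_add, map_sub, map_sub, coeff_mul_X_pow', coeff_mul_X_pow',
      coeff_mul_X_pow', coeff_mk]
    simp only [coeff_mk]
    rw [map_sub, map_add, coeff_X_pow, coeff_X_pow, coeff_X_pow]
    exact Hrec p hp n
  calc A * ((1 - X) * (1 - X ^ 2) * (1 - X ^ 3))
      = (A * (1 - X ^ 3)) * ((1 - X) * (1 - X ^ 2)) := by ring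
    _ = X ^ (p - 2) + X ^ (p - 1) - X ^ (2 * p - 3) := by rw [h1]; exact h2
end

section
/- For integers p ≥ 4 and N ≥ p-2, the number of partitions λ = (λ₁ ≥ λ₂ ≥ λ₃ ≥ 1) with λ₁ ≤ N and λ₁ - λ₃ ≥ p-2, counted by generating function χ^{N,[p]}(q) = ∑ q^{|λ|}, satisfies the recursion χ^{N,[p]}(q) = q^{p+1} · ((1-q^{N-p+2})/(1-q)) · ((1-q^{2N-p+1})/(1-q)) + q⁶ · χ^{N-4,[p-3]}(q), where for p-3 ∈ {1,2} one has χ^{N-4,[p-3]}(q) = q³ [N-2 choose 3]_q. -/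
open Finset Polynomial

/-- The Gaussian (q-)binomial coefficient, via the q-Pascal recursion. -/
noncomputable def gaussBinom : ℕ → ℕ → Polynomial ℤ
  | 0, 0 => 1
  | 0, _ + 1 => 0
  | _ + 1, 0 => 1
  | n + 1, k + 1 => gaussBinom n k + X ^ (k + 1) * gaussBinom n (k + 1)

/-- `chiT p N` = ∑ q^{a+b+c} over partitions (a ≥ b ≥ c ≥ 1) with a ≤ N and
a - c ≥ p - 2; here a = t.1+1, b = t.2.1+1, c = t.2.2+1 with t.i ∈ range N. -/
noncomputable def chiT (p N : ℕ) : Polynomial ℤ :=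
  ∑ t ∈ ((range N ×ˢ range N ×ˢ range N).filter
      (fun t => t.2.1 ≤ t.1 ∧ t.2.2 ≤ t.2.1 ∧
        ((t.1 : ℤ) + 1) - ((t.2.2 : ℤ) + 1) ≥ (p : ℤ) - 2)),
    X ^ (t.1 + t.2.1 + t.2.2 + 3)

private lemma geom (c k n : ℕ) :
    (1 - (X:Polynomial ℤ)^k) * ∑ i ∈ range n, X^(c+k*i) = X^c - X^(c+k*n) := by
  induction n with
  | zero => simp
  | succ n ih => rw [sum_range_succ, mul_add, ih]; ring

private lemma geom1 (c n : ℕ) :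
    (1 - (X:Polynomial ℤ)) * ∑ i ∈ range n, X^(c+i) = X^c - X^(c+n) := by
  have h := geom c 1 n
  simp only [pow_one, one_mul] at h
  exact h

private lemma geomS (n : ℕ) :
    (1 - (X:Polynomial ℤ)) * ∑ i ∈ range n, X^i = 1 - X^n := by
  have h := geom1 0 n
  simp only [zero_add, pow_zero] at h
  exact h

private lemma chiT_nf (p N : ℕ) :
    chiT p N = ∑ z ∈ range (N - (p-2)), ∑ i ∈ range (N - (p-2) - z),
      ∑ j ∈ range ((p-2) + i + 1), (X : Polynomial ℤ) ^ (3*z + (p-2) + i + 3 + j) := by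
  have step1 : chiT p N = ∑ x ∈ range N, ∑ y ∈ range N, ∑ z ∈ range N,
      if z + (p-2) ≤ x ∧ z ≤ y ∧ y ≤ x then (X : Polynomial ℤ) ^ (x+y+z+3) else 0 := by
    rw [chiT, sum_filter, Finset.sum_product]
    refine sum_congr rfl fun x _ => ?_
    rw [Finset.sum_product]
    refine sum_congr rfl fun y _ => sum_congr rfl fun z _ => ?_
    exact if_congr (by simp only [Prod.fst, Prod.snd]; omega) rfl rfl
  rw [step1]
  have step2 : (∑ x ∈ range N, ∑ y ∈ range N, ∑ z ∈ range N,
      if z + (p-2) ≤ x ∧ z ≤ y ∧ y ≤ x then (X : Polynomial ℤ) ^ (x+y+z+3) else 0)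
      = ∑ z ∈ range N, ∑ x ∈ range N, ∑ y ∈ range N,
      if z + (p-2) ≤ x ∧ z ≤ y ∧ y ≤ x then (X : Polynomial ℤ) ^ (x+y+z+3) else 0 := by
    exact (sum_congr rfl fun x _ => Finset.sum_comm).trans Finset.sum_comm
  rw [step2]
  have step3 : ∀ z ∈ range N, (∑ x ∈ range N, ∑ y ∈ range N,
      if z + (p-2) ≤ x ∧ z ≤ y ∧ y ≤ x then (X : Polynomial ℤ) ^ (x+y+z+3) else 0)
      = ∑ i ∈ range (N - (p-2) - z), ∑ j ∈ range ((p-2) + i + 1),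
          (X : Polynomial ℤ) ^ (3*z + (p-2) + i + 3 + j) := by
    intro z _
    have e1 : ∀ x ∈ range N, (∑ y ∈ range N,
        if z + (p-2) ≤ x ∧ z ≤ y ∧ y ≤ x then (X : Polynomial ℤ) ^ (x+y+z+3) else 0)
        = if z + (p-2) ≤ x then ∑ j ∈ range (x + 1 - z), (X : Polynomial ℤ) ^ (x+(z+j)+z+3) else 0 := by
      intro x hx
      by_cases h : z + (p-2) ≤ x
      · rw [if_pos h]
        simp only [h, true_and]
        rw [← sum_filter]
        have hfil : (range N).filter (fun y => z ≤ y ∧ y ≤ x) = Icc z x := by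
          ext y
          simp only [mem_filter, mem_range, mem_Icc]
          have := mem_range.mp hx
          omega
        rw [hfil, ← Finset.Ico_add_one_right_eq_Icc, Finset.sum_Ico_eq_sum_range]
      · rw [if_neg h]
        exact sum_eq_zero fun y _ => if_neg (by omega)
    rw [sum_congr rfl e1, ← sum_filter]
    have hfil2 : (range N).filter (fun x => z + (p-2) ≤ x) = Ico (z + (p-2)) N := by
      ext x
      simp only [mem_filter, mem_range, mem_Ico]
      omega
    rw [hfil2, Finset.sum_Ico_eq_sum_range,
        show N - (z + (p-2)) = N - (p-2) - z by omega]
    refine sum_congr rfl fun i _ => ?_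
    rw [show z + (p-2) + i + 1 - z = (p-2) + i + 1 by omega]
    refine sum_congr rfl fun j _ => ?_
    exact congrArg (fun n => (X:Polynomial ℤ)^n) (by omega)
  rw [sum_congr rfl step3]
  refine (Finset.sum_subset (by simp only [range_subset_range]; omega) ?_).symm
  intro z _ hz
  rw [show N - (p-2) - z = 0 by simp only [mem_range] at hz; omega]
  simp

/-- closed form: `(1-X)²(1-X²)(1-X³)·χ^{N,[p]}` with `e = p-2`, `u = N-e`. -/
noncomputable def Phi (e u : ℕ) : Polynomial ℤ :=
    (1 - X^2) * (X^3 * X^e - X^3 * X^e * (X^u)^3)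
  - (1 - X) * (X^4 * (X^e)^2 - X^4 * (X^e)^2 * (X^u)^3)
  - (1 - X^3) * (X^3 * X^e * X^u - X^3 * X^e * (X^u)^3)
  + (1 - X^3) * (X^4 * (X^e)^2 * (X^u)^2 - X^4 * (X^e)^2 * (X^u)^3)

private lemma Phi_zero (e : ℕ) : Phi e 0 = 0 := by
  simp only [Phi, pow_zero, one_pow, mul_one]
  ring

private lemma ML (p N : ℕ) :
    (1 - X) * (1 - X) * (1 - X^2) * (1 - X^3) * chiT p N = Phi (p-2) (N-(p-2)) := by
  rw [chiT_nf]
  set e := p - 2 with he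
  set u := N - e with hu
  have h1 : (1 - (X:Polynomial ℤ)) * (∑ z ∈ range u, ∑ i ∈ range (u-z),
        ∑ j ∈ range (e+i+1), X^(3*z+e+i+3+j))
      = (∑ z ∈ range u, ∑ i ∈ range (u-z), X^(3*z+e+3+i))
        - (∑ z ∈ range u, ∑ i ∈ range (u-z), X^(3*z+2*e+4+2*i)) := by
    rw [Finset.mul_sum, ← Finset.sum_sub_distrib]
    refine sum_congr rfl fun z hz => ?_
    rw [Finset.mul_sum, ← Finset.sum_sub_distrib]
    refine sum_congr rfl fun i hi => ?_
    rw [geom1 (3*z+e+i+3) (e+i+1),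
      show 3*z+e+i+3 = 3*z+e+3+i by ring,
      show 3*z+e+3+i+(e+i+1) = 3*z+2*e+4+2*i by ring]
  have h2 : (1 - (X:Polynomial ℤ)) * (∑ z ∈ range u, ∑ i ∈ range (u-z), X^(3*z+e+3+i))
      = (∑ z ∈ range u, X^(e+3+3*z)) - (∑ z ∈ range u, X^(e+u+3+2*z)) := by
    rw [Finset.mul_sum, ← Finset.sum_sub_distrib]
    refine sum_congr rfl fun z hz => ?_
    have hz' : z < u := mem_range.mp hz
    rw [geom1 (3*z+e+3) (u-z),
      show 3*z+e+3 = e+3+3*z by ring,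
      show e+3+3*z+(u-z) = e+u+3+2*z by omega]
  have h3 : (1 - (X:Polynomial ℤ)^2) * (∑ z ∈ range u, ∑ i ∈ range (u-z), X^(3*z+2*e+4+2*i))
      = (∑ z ∈ range u, X^(2*e+4+3*z)) - (∑ z ∈ range u, X^(2*e+2*u+4+z)) := by
    rw [Finset.mul_sum, ← Finset.sum_sub_distrib]
    refine sum_congr rfl fun z hz => ?_
    have hz' : z < u := mem_range.mp hz
    rw [geom (3*z+2*e+4) 2 (u-z),
      show 3*z+2*e+4 = 2*e+4+3*z by ring,
      show 2*e+4+3*z+2*(u-z) = 2*e+2*u+4+z by omega]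
  have h4 := geom (e+3) 3 u
  have h5 := geom (e+u+3) 2 u
  have h6 := geom (2*e+4) 3 u
  have h7 := geom1 (2*e+2*u+4) u
  simp only [Phi]
  linear_combination ((1-(X:Polynomial ℤ))*(1-X^2)*(1-X^3))*h1 + ((1-(X:Polynomial ℤ)^2)*(1-X^3))*h2
    - ((1-(X:Polynomial ℤ))*(1-X^3))*h3 + (1-(X:Polynomial ℤ)^2)*h4 - (1-(X:Polynomial ℤ)^3)*h5
    - (1-(X:Polynomial ℤ))*h6 + (1-(X:Polynomial ℤ)^3)*h7

private lemma gauss_zero (K : ℕ) : gaussBinom K 0 = 1 := by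
  cases K <;> rfl

private lemma gauss1 (K : ℕ) : (1 - (X:Polynomial ℤ)) * gaussBinom K 1 = 1 - X^K := by
  induction K with
  | zero => show (1 - (X:Polynomial ℤ)) * 0 = 1 - X^0; simp
  | succ K ih =>
    show (1 - (X:Polynomial ℤ)) * (gaussBinom K 0 + X^(0+1) * gaussBinom K 1) = 1 - X^(K+1)
    rw [gauss_zero]
    linear_combination (X^(0+1)) * ih

private lemma gauss2 (K : ℕ) :
    (1 - (X:Polynomial ℤ)) * (1 - X^2) * gaussBinom K 2 = (1 - X^K) * (1 - X^(K-1)) := by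
  induction K with
  | zero => show (1 - (X:Polynomial ℤ)) * (1 - X^2) * 0 = (1 - X^0) * (1 - X^(0-1)); simp
  | succ K ih =>
    show (1 - (X:Polynomial ℤ)) * (1 - X^2) * (gaussBinom K 1 + X^(1+1) * gaussBinom K 2)
        = (1 - X^(K+1)) * (1 - X^(K+1-1))
    rcases K with _ | K'
    · show (1 - (X:Polynomial ℤ)) * (1 - X^2) * (0 + X^(1+1) * 0) = (1 - X^1) * (1 - X^0)
      simp
    · rw [show K'+1+1-1 = K'+1 by omega]
      rw [show K'+1-1 = K' by omega] at ih
      have h1 := gauss1 (K'+1)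
      linear_combination ((1:Polynomial ℤ) - X^2) * h1 + ((X:Polynomial ℤ)^(1+1)) * ih

private lemma gauss3 (K : ℕ) :
    (1 - (X:Polynomial ℤ)) * (1 - X^2) * (1 - X^3) * gaussBinom K 3
      = (1 - X^K) * (1 - X^(K-1)) * (1 - X^(K-2)) := by
  induction K with
  | zero =>
    show (1 - (X:Polynomial ℤ)) * (1 - X^2) * (1 - X^3) * 0
        = (1 - X^0) * (1 - X^(0-1)) * (1 - X^(0-2))
    simp
  | succ K ih =>
    show (1 - (X:Polynomial ℤ)) * (1 - X^2) * (1 - X^3) * (gaussBinom K 2 + X^(2+1) * gaussBinom K 3)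
        = (1 - X^(K+1)) * (1 - X^(K+1-1)) * (1 - X^(K+1-2))
    rcases K with _ | _ | K'
    · show (1 - (X:Polynomial ℤ)) * (1 - X^2) * (1 - X^3) * (0 + X^(2+1) * 0)
          = (1 - X^1) * (1 - X^0) * (1 - X^(1-2))
      simp
    · show (1 - (X:Polynomial ℤ)) * (1 - X^2) * (1 - X^3)
            * (gaussBinom 1 2 + X^(2+1) * gaussBinom 1 3)
          = (1 - X^2) * (1 - X^1) * (1 - X^0)
      show (1 - (X:Polynomial ℤ)) * (1 - X^2) * (1 - X^3)
            * ((gaussBinom 0 1 + X^(1+1) * gaussBinom 0 2)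
              + X^(2+1) * (gaussBinom 0 2 + X^(2+1) * gaussBinom 0 3))
          = (1 - X^2) * (1 - X^1) * (1 - X^0)
      show (1 - (X:Polynomial ℤ)) * (1 - X^2) * (1 - X^3)
            * ((0 + X^(1+1) * 0) + X^(2+1) * (0 + X^(2+1) * 0))
          = (1 - X^2) * (1 - X^1) * (1 - X^0)
      simp
    · rw [show K'+2+1-1 = K'+2 by omega, show K'+2+1-2 = K'+1 by omega]
      rw [show K'+2-1 = K'+1 by omega, show K'+2-2 = K' by omega] at ih
      have h2 := gauss2 (K'+2)
      rw [show K'+2-1 = K'+1 by omega] at h2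
      linear_combination ((1:Polynomial ℤ) - X^3) * h2 + ((X:Polynomial ℤ)^(2+1)) * ih

/-- the recursion
χ^{N,[p]}(q) = q^{p+1} (1-q^{N-p+2})/(1-q) · (1-q^{2N-p+1})/(1-q) + q⁶ χ^{N-4,[p-3]}(q),
and for p - 3 ∈ {1,2}, χ^{N-4,[p-3]}(q) = q³ [N-2 choose 3]_q. -/
theorem stmt3 (p N : ℕ) (hp : 4 ≤ p) (hN : (p : ℤ) - 2 ≤ (N : ℤ)) :
    chiT p N
      = X ^ (p + 1) * (∑ i ∈ range (N + 2 - p), X ^ i) * (∑ i ∈ range (2 * N + 1 - p), X ^ i)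
        + X ^ 6 * chiT (p - 3) (N - 4)
    ∧ ((p - 3 = 1 ∨ p - 3 = 2) → chiT (p - 3) (N - 4) = X ^ 3 * gaussBinom (N - 2) 3) := by
  have hW : ((1 - X) * (1 - X) * (1 - X^2) * (1 - X^3) : Polynomial ℤ) ≠ 0 := by
    intro h
    have h0 := congrArg (Polynomial.eval 0) h
    simp at h0
  constructor
  · apply mul_left_cancel₀ hW
    rw [ML p N, mul_add]
    have hR := ML (p-3) (N-4)
    rw [show p-3-2 = p-5 by omega] at hR
    have hR' : (1 - X) * (1 - X) * (1 - X^2) * (1 - X^3) * ((X:Polynomial ℤ)^6 * chiT (p-3) (N-4))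
        = X^6 * Phi (p-5) (N-4-(p-5)) := by
      linear_combination ((X:Polynomial ℤ)^6) * hR
    rw [hR']
    have g1 := geomS (N+2-p)
    have g2 := geomS (2*N+1-p)
    have hS : (1 - X) * (1 - X) * (1 - X^2) * (1 - X^3) *
          ((X:Polynomial ℤ)^(p+1) * (∑ i ∈ range (N+2-p), X^i) * (∑ i ∈ range (2*N+1-p), X^i))
        = X^(p+1) * ((1 - X^(N+2-p)) * ((1 - X^(2*N+1-p)) * ((1-X^2)*(1-X^3)))) := by
      linear_combination ((X:Polynomial ℤ)^(p+1)*(1-X^2)*(1-X^3)*((1-X) * (∑ i ∈ range (2*N+1-p), (X:Polynomial ℤ)^i))) * g1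
        + ((X:Polynomial ℤ)^(p+1)*(1-X^2)*(1-X^3)*(1-X^(N+2-p))) * g2
    rw [hS]
    by_cases hu : N = p - 2
    · rw [show N-(p-2) = 0 by omega, show N+2-p = 0 by omega, show N-4-(p-5) = 0 by omega,
        Phi_zero, Phi_zero]
      simp
    · rcases eq_or_ne p 4 with rfl | hp5
      · by_cases hN3 : N = 3
        · subst hN3
          norm_num [Phi]
          ring
        · obtain ⟨v, rfl⟩ : ∃ v, N = v + 4 := ⟨N - 4, by omega⟩
          rw [show v+4-(4-2) = v+2 by omega, show v+4+2-4 = v+2 by omega,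
            show 2*(v+4)+1-4 = 2*v+5 by omega, show (4:ℕ)-5 = 0 by omega,
            show v+4-4-0 = v by omega, show (4:ℕ)+1 = 5 by omega]
          simp only [Phi]
          ring
      · obtain ⟨g, rfl⟩ : ∃ g, p = g + 5 := ⟨p - 5, by omega⟩
        obtain ⟨v, rfl⟩ : ∃ v, N = g + v + 4 := ⟨N - (g + 4), by omega⟩
        rw [show g+v+4-(g+5-2) = v+1 by omega, show g+v+4+2-(g+5) = v+1 by omega,
          show 2*(g+v+4)+1-(g+5) = g+2*v+4 by omega, show g+5-5 = g by omega,
          show g+v+4-4-g = v by omega, show g+5-2 = g+3 by omega, show g+5+1 = g+6 by omega]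
        simp only [Phi]
        ring
  · intro hp3
    apply mul_left_cancel₀ hW
    have hML := ML (p-3) (N-4)
    rw [show p-3-2 = 0 by omega, Nat.sub_zero] at hML
    rw [hML]
    rcases lt_or_ge N 4 with h4 | h4
    · rw [show N-4 = 0 by omega, Phi_zero]
      have hN23 : N = 2 ∨ N = 3 := by omega
      rcases hN23 with rfl | rfl
      · have hg : gaussBinom (2-2) 3 = 0 := rfl
        rw [hg]
        ring
      · have hg : gaussBinom (3-2) 3 = 0 := by
          show gaussBinom 0 2 + X^(2+1) * gaussBinom 0 3 = 0
          show (0:Polynomial ℤ) + X^(2+1) * 0 = 0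
          simp
        rw [hg]
        ring
    · obtain ⟨K, rfl⟩ : ∃ K, N = K + 4 := ⟨N - 4, by omega⟩
      have g3 := gauss3 (K+2)
      rw [show K+2-1 = K+1 by omega, show K+2-2 = K by omega] at g3
      rw [show K+4-2 = K+2 by omega, show K+4-4 = K by omega]
      simp only [Phi]
      linear_combination (-((X:Polynomial ℤ)^3 * (1-X))) * g3
end

section
/- If 2ν is not an integer, then the Gegenbauer polynomial C_n^ν(z) has no multiple zeros, i.e., C_n^ν(z) and its derivative have no common root. -/
open Polynomial

/-- The Gegenbauer polynomials: C₀ = 1, C₁ = 2νz, and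
(n+2) C_{n+2} = 2(n+ν+1) z C_{n+1} - (n+2ν) C_n. -/
noncomputable def gegenbauer (ν : ℂ) : ℕ → Polynomial ℂ
  | 0 => 1
  | 1 => C (2 * ν) * X
  | n + 2 => C (((n : ℂ) + 2)⁻¹) *
      (C (2 * ((n : ℂ) + ν + 1)) * X * gegenbauer ν (n + 1) - C ((n : ℂ) + 2 * ν) * gegenbauer ν n)

/-- The three-term recurrence, evaluated at a point, with denominators cleared. -/
lemma geg_rec (ν z : ℂ) (n : ℕ) :
    ((n:ℂ)+2) * ((gegenbauer ν (n+2)).eval z)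
      = 2*((n:ℂ)+ν+1)*z*((gegenbauer ν (n+1)).eval z) - ((n:ℂ)+2*ν)*((gegenbauer ν n).eval z) := by
  have hn : ((n:ℂ)+2) ≠ 0 := by
    have : ((n:ℕ)+2 : ℂ) ≠ 0 := by exact_mod_cast (Nat.succ_ne_zero (n+1))
    push_cast at this; exact this
  show ((n:ℂ)+2) * ((gegenbauer ν (n+2)).eval z) = _
  rw [gegenbauer]
  simp only [eval_mul, eval_sub, eval_C, eval_X]
  field_simp

/-- The derivative of the three-term recurrence, evaluated at a point. -/
lemma geg_drec (ν z : ℂ) (n : ℕ) :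
    ((n:ℂ)+2) * ((derivative (gegenbauer ν (n+2))).eval z)
      = 2*((n:ℂ)+ν+1)*((gegenbauer ν (n+1)).eval z + z * (derivative (gegenbauer ν (n+1))).eval z)
        - ((n:ℂ)+2*ν)*((derivative (gegenbauer ν n)).eval z) := by
  have hn : ((n:ℂ)+2) ≠ 0 := by
    have : ((n:ℕ)+2 : ℂ) ≠ 0 := by exact_mod_cast (Nat.succ_ne_zero (n+1))
    push_cast at this; exact this
  conv_lhs => rw [gegenbauer]
  simp only [derivative_mul, derivative_sub, derivative_C, derivative_X, eval_mul, eval_sub,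
    eval_add, eval_C, eval_X, zero_mul, mul_one, zero_add, zero_sub, add_zero, mul_zero]
  field_simp

/-- The key identity: (1-z²) C'_{n+1}(z) = -(n+1) z C_{n+1}(z) + (n+2ν) C_n(z). -/
lemma geg_deriv (ν z : ℂ) : ∀ n : ℕ,
    (1 - z^2) * ((derivative (gegenbauer ν (n+1))).eval z)
      = -((n:ℂ)+1)*z*((gegenbauer ν (n+1)).eval z) + ((n:ℂ)+2*ν)*((gegenbauer ν n).eval z) := by
  intro n
  induction n using Nat.twoStepInduction with
  | zero =>
    simp [gegenbauer]
    ring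
  | one =>
    simp [gegenbauer]
    ring
  | more n IH1 IH2 =>
    have hn3 : ((n:ℂ)+3) ≠ 0 := by
      have : ((n:ℕ)+3 : ℂ) ≠ 0 := by exact_mod_cast (Nat.succ_ne_zero (n+2))
      push_cast at this; exact this
    have E1 := geg_rec ν z (n+1)
    have E2 := geg_drec ν z (n+1)
    have E3 := geg_rec ν z n
    simp only [show n+1+1 = n+2 from rfl, show n+1+2 = n+3 from rfl] at E1 E2 IH2
    push_cast at E1 E2 E3 IH1 IH2 ⊢
    refine mul_left_cancel₀ hn3 ?_
    linear_combination (1-z^2)*E2 + 2*((n:ℂ)+ν+2)*z*IH2 - ((n:ℂ)+1+2*ν)*IH1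
      + ((n:ℂ)+3)*z*E1 - ((n:ℂ)+1+2*ν)*E3

/-- Two consecutive Gegenbauer polynomials have no common root. -/
lemma geg_no_consec (ν z : ℂ) (h : ∀ m : ℤ, 2 * ν ≠ (m : ℂ)) : ∀ k : ℕ,
    ¬ ((gegenbauer ν k).eval z = 0 ∧ (gegenbauer ν (k+1)).eval z = 0) := by
  intro k
  induction k with
  | zero => simp [gegenbauer]
  | succ k IH =>
    rintro ⟨h1, h2⟩
    apply IH
    have E := geg_rec ν z k
    rw [h1, show k+1+1 = k+2 from rfl] at E
    rw [h2] at E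
    have hk : ((k:ℂ)+2*ν) ≠ 0 := by
      intro hc
      apply h (-(k:ℤ))
      push_cast
      linear_combination hc
    constructor
    · have : ((k:ℂ)+2*ν) * (gegenbauer ν k).eval z = 0 := by linear_combination E
      exact (mul_eq_zero.mp this).resolve_left hk
    · exact h1

/-- if 2ν is not an integer, the Gegenbauer polynomial C_n^ν has no
multiple zeros: C_n^ν and its derivative have no common root. -/
theorem stmt6 (ν : ℂ) (h : ∀ m : ℤ, 2 * ν ≠ (m : ℂ)) (n : ℕ) (z : ℂ) :
    ¬ ((gegenbauer ν n).eval z = 0 ∧ ((gegenbauer ν n).derivative).eval z = 0) := by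
  rintro ⟨hf, hg⟩
  cases n with
  | zero => simp [gegenbauer] at hf
  | succ m =>
    have hd := geg_deriv ν z m
    rw [hf, hg] at hd
    have hm : ((m:ℂ)+2*ν) ≠ 0 := by
      intro hc
      apply h (-(m:ℤ))
      push_cast
      linear_combination hc
    have hfm : (gegenbauer ν m).eval z = 0 := by
      have h0 : ((m:ℂ)+2*ν) * (gegenbauer ν m).eval z = 0 := by linear_combination -hd
      exact (mul_eq_zero.mp h0).resolve_left hm
    exact geg_no_consec ν z h m ⟨hfm, hf⟩
end

section
/- For m ≥ 2, the operator l_m = ∑_{j=1}^{3} x_j^{m+1} ∂/∂x_j applied to z = (x₃-x₂)/(x₁-x₂) satisfies l_m(z) = Q_{m-1} · l₁(z), where Q_{m-1} = Sym[x₁^{m+1}x₂/((x₁-x₂)(x₁-x₃)(x₂-x₃))]. -/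
open MvPolynomial

/-- The field of rational functions in three variables x₁, x₂, x₃ over ℚ. -/
noncomputable abbrev K3 : Type := FractionRing (MvPolynomial (Fin 3) ℚ)

/-- The variable xᵢ viewed inside the field of rational functions. -/
noncomputable def xv (i : Fin 3) : K3 := algebraMap (MvPolynomial (Fin 3) ℚ) K3 (X i)

/-- Q_{m-1} = Sym[ x₁^{m+1} x₂ / ((x₁-x₂)(x₁-x₃)(x₂-x₃)) ]. -/
noncomputable def Qsym (m : ℕ) : K3 :=
  ∑ σ : Equiv.Perm (Fin 3),
    xv (σ 0) ^ (m + 1) * xv (σ 1) /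
      ((xv (σ 0) - xv (σ 1)) * (xv (σ 0) - xv (σ 2)) * (xv (σ 1) - xv (σ 2)))

lemma xv_sub_ne (i j : Fin 3) (h : i ≠ j) : xv i - xv j ≠ 0 := by
  refine sub_ne_zero.mpr fun e => h ?_
  exact X_injective (IsFractionRing.injective (MvPolynomial (Fin 3) ℚ) K3 e)

/-- Explicit 6-term expansion of `Qsym`. -/
lemma Qsym_eq (m : ℕ) : Qsym m =
    xv 0 ^ (m+1) * xv 1 / ((xv 0 - xv 1) * (xv 0 - xv 2) * (xv 1 - xv 2))
  + xv 1 ^ (m+1) * xv 0 / ((xv 1 - xv 0) * (xv 1 - xv 2) * (xv 0 - xv 2))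
  + xv 2 ^ (m+1) * xv 1 / ((xv 2 - xv 1) * (xv 2 - xv 0) * (xv 1 - xv 0))
  + xv 0 ^ (m+1) * xv 2 / ((xv 0 - xv 2) * (xv 0 - xv 1) * (xv 2 - xv 1))
  + xv 1 ^ (m+1) * xv 2 / ((xv 1 - xv 2) * (xv 1 - xv 0) * (xv 2 - xv 0))
  + xv 2 ^ (m+1) * xv 0 / ((xv 2 - xv 0) * (xv 2 - xv 1) * (xv 0 - xv 1)) := by
  rw [Qsym, show (Finset.univ : Finset (Equiv.Perm (Fin 3))) =
    {Equiv.refl _, Equiv.swap 0 1, Equiv.swap 0 2, Equiv.swap 1 2,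
     Equiv.swap 0 1 * Equiv.swap 1 2, Equiv.swap 1 2 * Equiv.swap 0 1} from by decide]
  rw [Finset.sum_insert (by decide), Finset.sum_insert (by decide),
      Finset.sum_insert (by decide), Finset.sum_insert (by decide),
      Finset.sum_insert (by decide), Finset.sum_singleton]
  norm_num [Equiv.swap_apply_def, Equiv.Perm.mul_apply, Fin.ext_iff]
  ring

/-- The underlying rational-function identity, in an arbitrary field. -/
lemma key {F : Type*} [Field F] (A B C a b c : F) (h01 : A - B ≠ 0) (h02 : A - C ≠ 0)
    (h12 : B - C ≠ 0) (h10 : B - A ≠ 0) (h20 : C - A ≠ 0) (h21 : C - B ≠ 0) :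
    (A - B)⁻¹ ^ 2 * ((A - B) * (c - b) - (C - B) * (a - b)) =
    (a * B / ((A - B) * (A - C) * (B - C)) +
                b * A / ((B - A) * (B - C) * (A - C)) +
              c * B / ((C - B) * (C - A) * (B - A)) +
            a * C / ((A - C) * (A - B) * (C - B)) +
          b * C / ((B - C) * (B - A) * (C - A)) +
        c * A / ((C - A) * (C - B) * (A - B))) *
      ((A - B)⁻¹ ^ 2 * ((A - B) * (C ^ 2 - B ^ 2) - (C - B) * (A ^ 2 - B ^ 2))) := by
  have hP : (A - B) * (A - C) * (B - C) ≠ 0 := mul_ne_zero (mul_ne_zero h01 h02) h12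
  have e2 : b * A / ((B - A) * (B - C) * (A - C)) = -(b * A) / ((A - B) * (A - C) * (B - C)) := by
    rw [div_eq_div_iff (mul_ne_zero (mul_ne_zero h10 h12) h02) hP]; ring
  have e3 : c * B / ((C - B) * (C - A) * (B - A)) = -(c * B) / ((A - B) * (A - C) * (B - C)) := by
    rw [div_eq_div_iff (mul_ne_zero (mul_ne_zero h21 h20) h10) hP]; ring
  have e4 : a * C / ((A - C) * (A - B) * (C - B)) = -(a * C) / ((A - B) * (A - C) * (B - C)) := by
    rw [div_eq_div_iff (mul_ne_zero (mul_ne_zero h02 h01) h21) hP]; ring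
  have e5 : b * C / ((B - C) * (B - A) * (C - A)) = b * C / ((A - B) * (A - C) * (B - C)) := by
    rw [div_eq_div_iff (mul_ne_zero (mul_ne_zero h12 h10) h20) hP]; ring
  have e6 : c * A / ((C - A) * (C - B) * (A - B)) = c * A / ((A - B) * (A - C) * (B - C)) := by
    rw [div_eq_div_iff (mul_ne_zero (mul_ne_zero h20 h21) h01) hP]; ring
  rw [e2, e3, e4, e5, e6, ← add_div, ← add_div, ← add_div,
    ← add_div, ← add_div, div_mul_eq_mul_div]
  field_simp
  ring

/-- for the derivations l_m = ∑ⱼ xⱼ^{m+1} ∂/∂xⱼ and l₁ = ∑ⱼ xⱼ² ∂/∂xⱼ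
on the field of rational functions, and z = (x₃-x₂)/(x₁-x₂), one has
l_m(z) = Q_{m-1} · l₁(z). -/
theorem stmt8 (m : ℕ) (hm : 2 ≤ m) (D1 Dm : Derivation ℚ K3 K3)
    (hD1 : ∀ i, D1 (xv i) = xv i ^ 2)
    (hDm : ∀ i, Dm (xv i) = xv i ^ (m + 1)) :
    Dm ((xv 2 - xv 1) / (xv 0 - xv 1)) = Qsym m * D1 ((xv 2 - xv 1) / (xv 0 - xv 1)) := by
  have h01 := xv_sub_ne 0 1 (by decide)
  have h02 := xv_sub_ne 0 2 (by decide)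
  have h12 := xv_sub_ne 1 2 (by decide)
  have h10 := xv_sub_ne 1 0 (by decide)
  have h20 := xv_sub_ne 2 0 (by decide)
  have h21 := xv_sub_ne 2 1 (by decide)
  rw [Derivation.leibniz_div, Derivation.leibniz_div, Qsym_eq]
  simp only [map_sub, hD1, hDm, smul_eq_mul]
  exact key (xv 0) (xv 1) (xv 2) (xv 0 ^ (m+1)) (xv 1 ^ (m+1)) (xv 2 ^ (m+1))
    h01 h02 h12 h10 h20 h21
end

section
/- Let J ⊆ ℂ[x,y] be a linear subspace containing 1 and x+y, and closed under multiplication by x+2y and by 2xy+y². Then J = ℂ[x,y]. -/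
open MvPolynomial

/-- a ℂ-linear subspace J ⊆ ℂ[x,y] containing 1 and x+y and closed under
multiplication by x+2y and by 2xy+y² is all of ℂ[x,y]. -/
theorem stmt11 (J : Submodule ℂ (MvPolynomial (Fin 2) ℂ))
    (h1 : (1 : MvPolynomial (Fin 2) ℂ) ∈ J)
    (h2 : X 0 + X 1 ∈ J)
    (h3 : ∀ f ∈ J, (X 0 + 2 * X 1) * f ∈ J)
    (h4 : ∀ f ∈ J, (2 * X 0 * X 1 + X 1 ^ 2) * f ∈ J) :
    J = ⊤ := by
  -- multiplication by constant polynomials preserves J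
  have hconst : ∀ (c : ℂ) (p : MvPolynomial (Fin 2) ℂ), p ∈ J → C c * p ∈ J := by
    intro c p hp
    have := J.smul_mem c hp
    rwa [smul_eq_C_mul] at this
  have h2mul : ∀ p ∈ J, (2 : MvPolynomial (Fin 2) ℂ) * p ∈ J := by
    intro p hp
    have := hconst 2 p hp
    rwa [map_ofNat] at this
  have h3div : ∀ p, (3 : MvPolynomial (Fin 2) ℂ) * p ∈ J → p ∈ J := by
    intro p hp
    have := hconst (3 : ℂ)⁻¹ _ hp
    rw [show (3 : MvPolynomial (Fin 2) ℂ) = C (3:ℂ) from (map_ofNat C 3).symm,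
      ← mul_assoc, ← C_mul] at this
    norm_num at this
    exact this
  -- y ∈ J
  have hy : (X 1 : MvPolynomial (Fin 2) ℂ) ∈ J := by
    have h := J.sub_mem (h3 1 h1) h2
    have e : (X 0 + 2 * X 1) * 1 - (X 0 + X 1) = (X 1 : MvPolynomial (Fin 2) ℂ) := by ring
    rwa [e] at h
  -- all powers of y, by a two-step induction: 3·y^(j+2) = 2·(x+2y)·y^(j+1) − (2xy+y²)·y^j
  have hrow0 : ∀ j : ℕ, (X 1 : MvPolynomial (Fin 2) ℂ) ^ j ∈ J := by
    have key : ∀ j : ℕ, (X 1 : MvPolynomial (Fin 2) ℂ) ^ j ∈ J ∧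
        (X 1 : MvPolynomial (Fin 2) ℂ) ^ (j+1) ∈ J := by
      intro j
      induction j with
      | zero => exact ⟨by simpa using h1, by simpa using hy⟩
      | succ n ih =>
        refine ⟨ih.2, ?_⟩
        apply h3div
        have hA := h2mul _ (h3 _ ih.2)
        have hB := h4 _ ih.1
        have h := J.sub_mem hA hB
        have e : (2 : MvPolynomial (Fin 2) ℂ) * ((X 0 + 2 * X 1) * X 1 ^ (n+1))
            - (2 * X 0 * X 1 + X 1 ^ 2) * X 1 ^ n
            = 3 * X 1 ^ (n + 1 + 1) := by ring
        rwa [e] at h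
    exact fun j => (key j).1
  -- all monomials x^i y^j, by induction on i: x^(i+1)·y^j = (x+2y)·x^i y^j − 2·x^i y^(j+1)
  have hmono : ∀ i j : ℕ, (X 0 : MvPolynomial (Fin 2) ℂ) ^ i * X 1 ^ j ∈ J := by
    intro i
    induction i with
    | zero => intro j; simpa using hrow0 j
    | succ n ih =>
      intro j
      have hA := h3 _ (ih j)
      have hB := h2mul _ (ih (j+1))
      have h := J.sub_mem hA hB
      have e : (X 0 + 2 * X 1) * (X 0 ^ n * X 1 ^ j)
          - (2 : MvPolynomial (Fin 2) ℂ) * (X 0 ^ n * X 1 ^ (j+1))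
          = X 0 ^ (n+1) * X 1 ^ j := by ring
      rwa [e] at h
  rw [eq_top_iff]
  intro p hmem
  clear hmem
  induction p using MvPolynomial.induction_on' with
  | add p q hp hq => exact J.add_mem hp hq
  | monomial u a =>
    have hu : u = Finsupp.single 0 (u 0) + Finsupp.single 1 (u 1) := by
      ext k
      fin_cases k <;> simp [Finsupp.single_apply]
    have : monomial u a = C a * (X 0 ^ (u 0) * X 1 ^ (u 1)) := by
      rw [hu]
      simp [X_pow_eq_monomial, monomial_mul, C_mul_monomial]
    rw [this]
    exact hconst a _ (hmono _ _)
end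

section
/- For a partition λ with parts λ₁ ≥ ⋯ ≥ λ_n, if (λ_{i-1}, λ_i, λ_{i+1}) is replaced by (μ_{i-1}, μ_i, μ_{i+1}) with μ_{i-1} + μ_i + μ_{i+1} = λ_{i-1} + λ_i + λ_{i+1} and μ_{i-1} - μ_{i+1} > λ_{i-1} - λ_{i+1}, then after reordering the resulting sequence into a partition λ̃, the statistic ∑_i i·λ_i strictly decreases: ∑_i i·λ̃_i < ∑_i i·λ_i. (It suffices to verify the four cases: (1) μ_{i-1}>λ_{i-1}, μ_i<λ_i, μ_{i+1}>λ_{i+1}; (2) μ_{i-1}>λ_{i-1}, μ_i<λ_i, μ_{i+1}≤λ_{i+1}; (3) μ_{i-1}>λ_{i-1}, μ_i≥λ_i, μ_{i+1}≤λ_{i+1}; (4) μ_{i-1}≤λ_{i-1}, μ_i>λ_i, μ_{i+1}<λ_{i+1}.) -/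
-- auxiliary: two monotone tuples with equal value multisets are equal
lemma aux_mono_eq {n : ℕ} {u v : Fin n → ℕ} (hu : Monotone u) (hv : Monotone v)
    (h : Multiset.map u Finset.univ.val = Multiset.map v Finset.univ.val) : u = v := by
  apply List.ofFn_injective
  refine List.Perm.eq_of_sortedLE hu.sortedLE_ofFn hv.sortedLE_ofFn ?_
  rw [← Multiset.coe_eq_coe, ← Fin.univ_val_map, ← Fin.univ_val_map]
  simpa using h

-- auxiliary: ∑ (j+1)*f j minimal over rearrangements for antitone f
lemma aux_min {n : ℕ} {f g : Fin n → ℕ} (hf : Antitone f)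
    (h : Multiset.map f Finset.univ.val = Multiset.map g Finset.univ.val) :
    ∑ j : Fin n, ((j : ℕ) + 1) * f j ≤ ∑ j : Fin n, ((j : ℕ) + 1) * g j := by
  -- sort both
  set τ := Tuple.sort g with hτ
  set ρ := Tuple.sort f with hρ
  have h1 : f ∘ ρ = g ∘ τ := by
    apply aux_mono_eq (Tuple.monotone_sort f) (Tuple.monotone_sort g)
    have e1 : Multiset.map (f ∘ ρ) Finset.univ.val = Multiset.map f Finset.univ.val := by
      rw [← Multiset.map_map, Multiset.map_univ_val_equiv]
    have e2 : Multiset.map (g ∘ τ) Finset.univ.val = Multiset.map g Finset.univ.val := by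
      rw [← Multiset.map_map, Multiset.map_univ_val_equiv]
    rw [e1, e2, h]
  have hg : g = f ∘ (τ.symm.trans ρ) := by
    funext j
    have := congrFun h1 (τ.symm j)
    simp only [Function.comp_apply, Equiv.apply_symm_apply] at this
    simp [Equiv.trans, ← this]
  have hav : Antivary (fun j : Fin n => (j : ℕ) + 1) f := by
    intro p q hpq
    by_contra hle
    push_neg at hle
    have : p ≤ q := by
      by_contra hc
      push_neg at hc
      exact absurd (Nat.add_le_add_right (Nat.succ_le_succ hc.le) 0) (by
        simp at hle ⊢
        omega)
    exact absurd (hf this) (by omega)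
  have := hav.sum_smul_le_sum_smul_comp_perm (σ := τ.symm.trans ρ)
  rw [hg]
  simpa [smul_eq_mul] using this


/-- replacing the triple (λ_{i-1}, λ_i, λ_{i+1}) of a partition by a
sum-preserving, spread-increasing sorted triple (a,b,c) and reordering into a partition λ̃
strictly decreases the statistic ∑ i·λ_i.  The multiset condition is phrased additively:
(values of λ̃) + {λ_{i-1},λ_i,λ_{i+1}} = (values of λ) + {a,b,c}. -/
theorem stmt14 (n i : ℕ) (hi1 : 1 ≤ i) (hi2 : i + 1 < n)
    (lam lamt : Fin n → ℕ) (hlam : Antitone lam) (hlamt : Antitone lamt)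
    (a b c : ℕ) (hab : b ≤ a) (hbc : c ≤ b)
    (hsum : a + b + c
      = lam ⟨i - 1, by omega⟩ + lam ⟨i, by omega⟩ + lam ⟨i + 1, hi2⟩)
    (hspread : ((lam ⟨i - 1, by omega⟩ : ℤ) - (lam ⟨i + 1, hi2⟩ : ℤ)) < (a : ℤ) - (c : ℤ))
    (hmul : Multiset.map lamt Finset.univ.val
          + {lam ⟨i - 1, by omega⟩, lam ⟨i, by omega⟩, lam ⟨i + 1, hi2⟩}
        = Multiset.map lam Finset.univ.val + {a, b, c}) :
    ∑ j : Fin n, ((j : ℕ) + 1) * lamt j < ∑ j : Fin n, ((j : ℕ) + 1) * lam j := by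
  have hip : i - 1 < n := by omega
  have hiq : i < n := by omega
  set p : Fin n := ⟨i - 1, hip⟩ with hpdef
  set q : Fin n := ⟨i, hiq⟩ with hqdef
  set r : Fin n := ⟨i + 1, hi2⟩ with hrdef
  have hmul' : Multiset.map lamt Finset.univ.val + {lam p, lam q, lam r}
      = Multiset.map lam Finset.univ.val + {a, b, c} := hmul
  have hqp : q ≠ p := Fin.ne_of_val_ne (by simp [hpdef, hqdef]; omega)
  have hrp : r ≠ p := Fin.ne_of_val_ne (by simp [hpdef, hrdef]; omega)
  have hrq : r ≠ q := Fin.ne_of_val_ne (by simp [hqdef, hrdef])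
  set g : Fin n → ℕ := fun j => if j = p then a else if j = q then b else
    if j = r then c else lam j with hgdef
  have hgp : g p = a := by simp [hgdef]
  have hgq : g q = b := by simp [hgdef, hqp]
  have hgr : g r = c := by simp [hgdef, hrp, hrq]
  -- decompose univ.val
  set T : Multiset (Fin n) := Finset.univ.val with hT
  have nd : T.Nodup := Finset.univ.nodup
  have hp : p ∈ T := Finset.mem_univ p
  have hq' : q ∈ T.erase p := (Multiset.mem_erase_of_ne hqp).mpr (Finset.mem_univ q)
  have hr' : r ∈ (T.erase p).erase q :=
    (Multiset.mem_erase_of_ne hrq).mpr ((Multiset.mem_erase_of_ne hrp).mpr (Finset.mem_univ r))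
  set s : Multiset (Fin n) := ((T.erase p).erase q).erase r with hs
  have hdecomp : T = p ::ₘ q ::ₘ r ::ₘ s := by
    rw [hs, Multiset.cons_erase hr', Multiset.cons_erase hq', Multiset.cons_erase hp]
  have hmem : ∀ x ∈ s, x ≠ p ∧ x ≠ q ∧ x ≠ r := by
    intro x hx
    have ndp : (T.erase p).Nodup := nd.erase p
    have ndq : ((T.erase p).erase q).Nodup := ndp.erase q
    have hx1 : x ∈ (T.erase p).erase q := Multiset.erase_subset _ _ hx
    have hx2 : x ∈ T.erase p := Multiset.erase_subset _ _ hx1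
    refine ⟨?_, ?_, ?_⟩
    · rintro rfl; exact (Multiset.Nodup.notMem_erase nd) hx2
    · rintro rfl; exact (Multiset.Nodup.notMem_erase ndp) hx1
    · rintro rfl; exact (Multiset.Nodup.notMem_erase ndq) hx
  have hmaps : Multiset.map g s = Multiset.map lam s := by
    apply Multiset.map_congr rfl
    intro x hx
    obtain ⟨h1, h2, h3⟩ := hmem x hx
    simp [hgdef, h1, h2, h3]
  have hmapg : Multiset.map g T + {lam p, lam q, lam r}
      = Multiset.map lam T + {a, b, c} := by
    rw [hdecomp]
    simp only [Multiset.map_cons, hgp, hgq, hgr, hmaps]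
    simp only [Multiset.insert_eq_cons, ← Multiset.singleton_add]
    abel
  have hmt : Multiset.map lamt T = Multiset.map g T :=
    add_right_cancel (hmul'.trans hmapg.symm)
  have hle : ∑ j : Fin n, ((j : ℕ) + 1) * lamt j ≤ ∑ j : Fin n, ((j : ℕ) + 1) * g j :=
    aux_min hlamt hmt
  refine lt_of_le_of_lt hle ?_
  -- strict inequality for g vs lam
  have hSsub : ({p, q, r} : Finset (Fin n)) ⊆ Finset.univ := Finset.subset_univ _
  have hsplit : ∀ f : Fin n → ℕ, ∑ j : Fin n, ((j : ℕ) + 1) * f j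
      = ∑ j ∈ Finset.univ \ {p, q, r}, ((j : ℕ) + 1) * f j
        + (((p : ℕ) + 1) * f p + (((q : ℕ) + 1) * f q + ((r : ℕ) + 1) * f r)) := by
    intro f
    rw [← Finset.sum_sdiff hSsub]
    congr 1
    rw [Finset.sum_insert (by simp [hqp.symm, hrp.symm]),
      Finset.sum_insert (by simp [hrq.symm]), Finset.sum_singleton]
  rw [hsplit g, hsplit lam]
  have hpre : ∑ j ∈ Finset.univ \ {p, q, r}, ((j : ℕ) + 1) * g j
      = ∑ j ∈ Finset.univ \ {p, q, r}, ((j : ℕ) + 1) * lam j := by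
    apply Finset.sum_congr rfl
    intro x hx
    simp only [Finset.mem_sdiff, Finset.mem_insert, Finset.mem_singleton] at hx
    push_neg at hx
    obtain ⟨-, h1, h2, h3⟩ := hx
    simp [hgdef, h1, h2, h3]
  rw [hpre]
  apply Nat.add_lt_add_left
  · -- numeric part
    have hs' : (a : ℤ) + b + c = (lam p : ℤ) + lam q + lam r := by exact_mod_cast hsum
    have hwp : (p : ℕ) + 1 = i := by simp [hpdef]; omega
    have hwq : (q : ℕ) + 1 = i + 1 := by simp [hqdef]
    have hwr : (r : ℕ) + 1 = i + 2 := by simp [hrdef]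
    rw [hgp, hgq, hgr, hwp, hwq, hwr]
    have h1 : (i : ℤ) * ((a : ℤ) + b + c) = (i : ℤ) * ((lam p : ℤ) + lam q + lam r) := by
      rw [hs']
    zify
    nlinarith [h1, hspread, hs']
end

section
/- For p ≥ 4, a partition ν ∈ C^{[p]}_{N,n} has empty index set S_ν if and only if ν = B₁(λ) for some partition λ ∈ C^{[p-3]}_{L,n} with L = N - 2(n-1), where S_ν is the set of indices i (1 ≤ i ≤ n) satisfying one of: (a_i) ν_i = ν_{i+1}; (b_i) ν_i = ν_{i+1}+1 and ν_{i-1} - ν_{i+1} ≥ p-1; (c_i) ν_{i-1} > ν_i > ν_{i+1} and ν_{i-1} - ν_{i+1} = p-2 (with conventions ν₀ = +∞, ν_{n+1} = -∞). -/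
/-- for ν ∈ C^{[p]}_{N,n} (indexed ν₁,…,ν_n, i.e. `nu i` for 1 ≤ i ≤ n),
the index set S_ν is empty iff ν = B₁(λ) for some λ ∈ C^{[p-3]}_{L,n}, L = N-2(n-1).
The boundary conventions ν₀ = +∞, ν_{n+1} = -∞ are built into the three conditions:
(a_i) needs i+1 ≤ n; (b_i) needs i+1 ≤ n, and its inequality holds automatically when
i = 1; (c_i) needs 2 ≤ i and i+1 ≤ n. -/
theorem stmt18 (p : ℕ) (hp : 4 ≤ p) (N n : ℕ)
    (nu : ℕ → ℕ)
    (hmono : ∀ i j : ℕ, 1 ≤ i → i ≤ j → j ≤ n → nu j ≤ nu i)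
    (hlow : ∀ i : ℕ, 1 ≤ i → i ≤ n → 1 ≤ nu i)
    (hup : ∀ i : ℕ, 1 ≤ i → i ≤ n → nu i ≤ N)
    (hgap : ∀ i : ℕ, 1 ≤ i → i + 2 ≤ n → ((nu i : ℤ) - (nu (i + 2) : ℤ)) ≥ (p : ℤ) - 2) :
    (∀ i : ℕ, 1 ≤ i → i ≤ n →
      ¬ ((i + 1 ≤ n ∧ nu i = nu (i + 1)) ∨
         (i + 1 ≤ n ∧ nu i = nu (i + 1) + 1 ∧
           (i = 1 ∨ ((nu (i - 1) : ℤ) - (nu (i + 1) : ℤ)) ≥ (p : ℤ) - 1)) ∨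
         (2 ≤ i ∧ i + 1 ≤ n ∧ nu i < nu (i - 1) ∧ nu (i + 1) < nu i ∧
           ((nu (i - 1) : ℤ) - (nu (i + 1) : ℤ)) = (p : ℤ) - 2)))
    ↔ ∃ lam : ℕ → ℕ,
        (∀ i j : ℕ, 1 ≤ i → i ≤ j → j ≤ n → lam j ≤ lam i) ∧
        (∀ i : ℕ, 1 ≤ i → i ≤ n →
          1 ≤ lam i ∧ (lam i : ℤ) ≤ (N : ℤ) - 2 * ((n : ℤ) - 1)) ∧
        (∀ i : ℕ, 1 ≤ i → i + 2 ≤ n →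
          ((lam i : ℤ) - (lam (i + 2) : ℤ)) ≥ (p : ℤ) - 5) ∧
        (∀ i : ℕ, 1 ≤ i → i ≤ n → nu i = lam i + 2 * (n - i)) := by
  constructor
  · intro h
    -- Step 1: consecutive gaps are at least 2
    have hstep : ∀ i : ℕ, 1 ≤ i → i + 1 ≤ n → nu (i + 1) + 2 ≤ nu i := by
      intro i h1 hin
      by_contra hcon
      have hmle : nu (i + 1) ≤ nu i := hmono i (i+1) h1 (by omega) hin
      have hi := h i h1 (by omega)
      have hne : nu i ≠ nu (i + 1) := fun he => hi (Or.inl ⟨hin, he⟩)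
      have heq : nu i = nu (i + 1) + 1 := by omega
      -- not (b) gives i ≥ 2 and nu(i-1) - nu(i+1) ≤ p - 2
      have hnb : ¬ (i = 1 ∨ ((nu (i - 1) : ℤ) - (nu (i + 1) : ℤ)) ≥ (p : ℤ) - 1) := by
        intro hor
        exact hi (Or.inr (Or.inl ⟨hin, heq, hor⟩))
      push_neg at hnb
      obtain ⟨hi1, hlt⟩ := hnb
      have hi2 : 2 ≤ i := by omega
      have hg := hgap (i - 1) (by omega) (by omega)
      have hrw : i - 1 + 2 = i + 1 := by omega
      rw [hrw] at hg
      have heq2 : ((nu (i - 1) : ℤ) - (nu (i + 1) : ℤ)) = (p : ℤ) - 2 := by omega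
      -- condition (c) at i holds, contradiction
      apply hi
      refine Or.inr (Or.inr ⟨hi2, hin, ?_, by omega, heq2⟩)
      have : (nu (i - 1) : ℤ) = (nu (i + 1) : ℤ) + (p : ℤ) - 2 := by omega
      have hp' : (4 : ℤ) ≤ (p : ℤ) := by exact_mod_cast hp
      omega
    -- Step 2: strengthened gap
    have hgap' : ∀ i : ℕ, 1 ≤ i → i + 2 ≤ n →
        ((nu i : ℤ) - (nu (i + 2) : ℤ)) ≥ (p : ℤ) - 1 := by
      intro i h1 hin
      have hg := hgap i h1 hin
      have hi := h (i + 1) (by omega) (by omega)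
      have hs1 := hstep i h1 (by omega)
      have hs2 := hstep (i + 1) (by omega) (by omega)
      have hrr : i + 1 + 1 = i + 2 := by omega
      rw [hrr] at hs2
      have hne : ((nu i : ℤ) - (nu (i + 2) : ℤ)) ≠ (p : ℤ) - 2 := by
        intro heq
        apply hi
        have hr1 : i + 1 - 1 = i := by omega
        have hr2 : i + 1 + 1 = i + 2 := by omega
        refine Or.inr (Or.inr ⟨by omega, by omega, ?_, ?_, ?_⟩) <;>
          simp only [hr1, hr2]
        · omega
        · omega
        · exact heq
      omega
    -- Step 3: chain inequality nu (i+d) + 2*d ≤ nu i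
    have hchain : ∀ d i : ℕ, 1 ≤ i → i + d ≤ n → nu (i + d) + 2 * d ≤ nu i := by
      intro d
      induction d with
      | zero => intro i _ _; simp
      | succ k ih =>
        intro i h1 hle
        have h2 := ih (i + 1) (by omega) (by omega)
        have h3 := hstep i h1 (by omega)
        have : i + 1 + k = i + (k + 1) := by omega
        rw [this] at h2
        omega
    have hchain' : ∀ i j : ℕ, 1 ≤ i → i ≤ j → j ≤ n → nu j + 2 * (j - i) ≤ nu i := by
      intro i j h1 hij hjn
      have := hchain (j - i) i h1 (by omega)
      have hrw : i + (j - i) = j := by omega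
      rw [hrw] at this
      exact this
    refine ⟨fun i => nu i - 2 * (n - i), ?_, ?_, ?_, ?_⟩
    · intro i j h1 hij hjn
      dsimp only
      have h2 := hchain' i j h1 hij hjn
      omega
    · intro i h1 hin
      dsimp only
      have h2 := hchain' i n h1 hin le_rfl
      have h3 := hlow n (by omega) le_rfl
      have h4 := hchain' 1 i le_rfl h1 hin
      have h5 := hup 1 le_rfl (by omega)
      constructor
      · omega
      · omega
    · intro i h1 hin
      dsimp only
      have hg := hgap' i h1 hin
      have h2 := hchain' (i + 2) n (by omega) hin le_rfl
      have h3 := hlow n (by omega) (le_refl n)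
      have h4 := hchain' i n h1 (by omega) le_rfl
      omega
    · intro i h1 hin
      dsimp only
      have h2 := hchain' i n h1 hin le_rfl
      have h3 := hlow n (by omega) le_rfl
      omega
  · rintro ⟨lam, hm, hb, hg, he⟩ i h1 hin hcond
    have hni := he i h1 hin
    rcases hcond with ⟨h2, h3⟩ | ⟨h2, h3, _⟩ | ⟨h2, h3, h4, h5, h6⟩
    · have hn1 := he (i + 1) (by omega) h2
      have hml := hm i (i + 1) h1 (by omega) h2
      omega
    · have hn1 := he (i + 1) (by omega) h2
      have hml := hm i (i + 1) h1 (by omega) h2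
      omega
    · have hg' := hg (i - 1) (by omega) (by omega)
      have hrw : i - 1 + 2 = i + 1 := by omega
      rw [hrw] at hg'
      have hn0 := he (i - 1) (by omega) (by omega)
      have hn1 := he (i + 1) (by omega) h3
      have hp' : (4 : ℤ) ≤ (p : ℤ) := by exact_mod_cast hp
      have e0 : ((nu (i-1) : ℤ)) = (lam (i-1) : ℤ) + 2 * ((n : ℤ) - (i - 1 : ℕ)) := by
        rw [hn0]; push_cast; omega
      have e1 : ((nu (i+1) : ℤ)) = (lam (i+1) : ℤ) + 2 * ((n : ℤ) - (i + 1 : ℕ)) := by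
        rw [hn1]; push_cast; omega
      omega
end
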